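/- Let P(T) = Σ_{k≥1} π_k T^k ∈ 𝒪_E[[T]] be a power series with zero constant term such that π_1 ≠ 0 and π_1 ∈ 𝔪_E, and let A(T) = Σ_{k≥1} a_k T^k ∈ E[[T]] be the unique power series with zero constant term, a_1 = 1, and A(P(T)) = π_1·A(T). Then for every x ∈ E with ‖x‖ < ‖π_1‖, the family (a_k x^k)_{k≥1} is summable in E (equivalently, a_k x^k → 0), so the series A(x) = Σ_{k≥1} a_k x^k converges. -/

import Mathlib

open PowerSeries

/-- Formal substitution `f(g)` of a power series `g` with zero constant term into a power
series `f`. -/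
noncomputable def PowerSeries.comp {R : Type*} [CommRing R] (f g : PowerSeries R) :
    PowerSeries R :=
  PowerSeries.mk fun n => ∑ k ∈ Finset.range (n + 1), coeff k f * coeff n (g ^ k)

/-!
Comparing coefficients of `T^(n+2)` in `A(P(T)) = π A(T)` gives
`a_{n+2} (π - π^(n+2)) = ∑_{k ≤ n+1} a_k [T^(n+2)] P^k`. The coefficients of `P^k` are integral
and `‖π - π^(n+2)‖ = ‖π‖` because `‖π‖ < 1`, so the ultrametric inequality yields
`‖a_{n+1}‖ ≤ ‖a_1‖ ‖π‖^(-n)` by strong induction. Hence `a_k x^k` is dominated by a geometric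
series of ratio `‖x‖ / ‖π‖ < 1`, and `E` is complete, being finite-dimensional over `ℚ_p`.
-/

theorem IsUltrametricDist.norm_sub_pow_eq_norm {K : Type*} [NormedField K] [IsUltrametricDist K]
    {x : K} (hx : ‖x‖ < 1) (n : ℕ) : ‖x - x ^ (n + 2)‖ = ‖x‖ := by
  rcases eq_or_ne x 0 with rfl | hx0
  · simp
  have hlt : ‖-x ^ (n + 2)‖ < ‖x‖ := by
    rw [norm_neg, norm_pow, pow_succ']
    exact mul_lt_of_lt_one_right (norm_pos_iff.mpr hx0) (pow_lt_one₀ (norm_nonneg x) hx (by omega))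
  rw [sub_eq_add_neg, IsUltrametricDist.norm_add_eq_max_of_norm_ne_norm hlt.ne', max_eq_left hlt.le]

namespace PowerSeries

theorem coeff_pow_self_of_constantCoeff_eq_zero {R : Type*} [CommSemiring R] {P : PowerSeries R}
    (hP : constantCoeff P = 0) (n : ℕ) : coeff n (P ^ n) = coeff 1 P ^ n := by
  obtain ⟨Q, rfl⟩ := X_dvd_iff.mpr hP
  rw [mul_pow, coeff_X_pow_mul', if_pos le_rfl, Nat.sub_self, coeff_zero_eq_constantCoeff,
    map_pow, ← zero_add 1, coeff_succ_X_mul, coeff_zero_eq_constantCoeff]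

theorem norm_coeff_pow_le_one {R : Type*} [NormedRing R] [NormOneClass R] [IsUltrametricDist R]
    {P : PowerSeries R} (hP : ∀ n, ‖coeff n P‖ ≤ 1) (k n : ℕ) : ‖coeff n (P ^ k)‖ ≤ 1 := by
  induction k generalizing n with
  | zero => rw [pow_zero, coeff_one]; split_ifs <;> simp
  | succ k ih =>
    rw [pow_succ, coeff_mul]
    refine IsUltrametricDist.norm_sum_le_of_forall_le_of_nonneg zero_le_one fun ij _ ↦ ?_
    exact (norm_mul_le _ _).trans (mul_le_one₀ (ih _) (norm_nonneg _) (hP _))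

section CommRing

variable {R : Type*} [CommRing R]

theorem coeff_comp (f g : PowerSeries R) (n : ℕ) :
    coeff n (f.comp g) = ∑ k ∈ Finset.range (n + 1), coeff k f * coeff n (g ^ k) :=
  coeff_mk _ _

theorem coeff_mul_sub_pow_eq_sum_of_comp_eq {P A : PowerSeries R} (hP0 : constantCoeff P = 0)
    (hAP : A.comp P = C (coeff 1 P) * A) (m : ℕ) :
    coeff (m + 2) A * (coeff 1 P - coeff 1 P ^ (m + 2)) =
      ∑ j ∈ Finset.range (m + 1), coeff (j + 1) A * coeff (m + 2) (P ^ (j + 1)) := by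
  have h := congrArg (coeff (m + 2)) hAP
  rw [coeff_comp, coeff_C_mul, Finset.sum_range_succ, Finset.sum_range_succ',
    coeff_pow_self_of_constantCoeff_eq_zero hP0, pow_zero, coeff_one, if_neg (by omega),
    mul_zero, add_zero] at h
  linear_combination -h

end CommRing

theorem norm_coeff_succ_le_of_comp_eq {K : Type*} [NormedField K] [IsUltrametricDist K]
    {P A : PowerSeries K} (hPint : ∀ n, ‖coeff n P‖ ≤ 1) (hP0 : constantCoeff P = 0)
    (hπ0 : coeff 1 P ≠ 0) (hπ1 : ‖coeff 1 P‖ < 1) (hAP : A.comp P = C (coeff 1 P) * A) (n : ℕ) :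
    ‖coeff (n + 1) A‖ ≤ ‖coeff 1 A‖ * ‖coeff 1 P‖⁻¹ ^ n := by
  induction n using Nat.strong_induction_on with
  | _ n ih =>
  rcases n with _ | m
  · simp
  have hc : 0 < ‖coeff 1 P‖ := norm_pos_iff.mpr hπ0
  have hsum : ‖∑ j ∈ Finset.range (m + 1), coeff (j + 1) A * coeff (m + 2) (P ^ (j + 1))‖ ≤
      ‖coeff 1 A‖ * ‖coeff 1 P‖⁻¹ ^ m := by
    refine IsUltrametricDist.norm_sum_le_of_forall_le_of_nonneg (by positivity) fun j hj ↦ ?_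
    have hjm : j ≤ m := Nat.lt_succ_iff.mp (Finset.mem_range.mp hj)
    calc ‖coeff (j + 1) A * coeff (m + 2) (P ^ (j + 1))‖
        ≤ ‖coeff (j + 1) A‖ * 1 := by
          rw [norm_mul]; gcongr; exact norm_coeff_pow_le_one hPint _ _
      _ ≤ ‖coeff 1 A‖ * ‖coeff 1 P‖⁻¹ ^ j := by rw [mul_one]; exact ih j (by omega)
      _ ≤ ‖coeff 1 A‖ * ‖coeff 1 P‖⁻¹ ^ m := by
          gcongr
          exact (one_le_inv₀ hc).mpr hπ1.le
  have hstep : ‖coeff (m + 2) A‖ * ‖coeff 1 P‖ ≤ ‖coeff 1 A‖ * ‖coeff 1 P‖⁻¹ ^ m :=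
    calc ‖coeff (m + 2) A‖ * ‖coeff 1 P‖
        = ‖coeff (m + 2) A * (coeff 1 P - coeff 1 P ^ (m + 2))‖ := by
          rw [norm_mul, IsUltrametricDist.norm_sub_pow_eq_norm hπ1]
      _ ≤ _ := by rwa [coeff_mul_sub_pow_eq_sum_of_comp_eq hP0 hAP]
  rw [pow_succ, ← mul_assoc, ← div_eq_mul_inv]
  exact (le_div_iff₀ hc).mpr hstep

end PowerSeries

theorem logarithm_summable_general
    {p : ℕ} [Fact p.Prime] (E : Type*) [NormedField E] [IsUltrametricDist E]
    [NormedAlgebra ℚ_[p] E] [FiniteDimensional ℚ_[p] E]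
    (P : PowerSeries E) (hPint : ∀ n, ‖coeff n P‖ ≤ 1)
    (hP0 : constantCoeff P = 0)
    (hπ1m : ‖coeff 1 P‖ < 1)
    (A : PowerSeries E)
    (hAP : A.comp P = C (coeff 1 P) * A)
    (x : E) (hx : ‖x‖ < ‖coeff 1 P‖) :
    Summable (fun k : ℕ => coeff k A * x ^ k) := by
  have : CompleteSpace E := FiniteDimensional.complete ℚ_[p] E
  have hc : 0 < ‖coeff 1 P‖ := (norm_nonneg x).trans_lt hx
  have hr : ‖x‖ / ‖coeff 1 P‖ < 1 := (div_lt_one hc).mpr hx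
  refine (summable_nat_add_iff 1).mp <| Summable.of_norm_bounded
    ((summable_geometric_of_lt_one (by positivity) hr).mul_left (‖coeff 1 A‖ * ‖x‖)) fun k ↦ ?_
  calc ‖coeff (k + 1) A * x ^ (k + 1)‖ = ‖coeff (k + 1) A‖ * ‖x‖ ^ (k + 1) := by
        rw [norm_mul, norm_pow]
    _ ≤ ‖coeff 1 A‖ * ‖coeff 1 P‖⁻¹ ^ k * ‖x‖ ^ (k + 1) := by
        gcongr
        exact norm_coeff_succ_le_of_comp_eq hPint hP0 (norm_pos_iff.mp hc) hπ1m hAP k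
    _ = ‖coeff 1 A‖ * ‖x‖ * (‖x‖ / ‖coeff 1 P‖) ^ k := by ring

/-- Let `P = Σ_{k≥1} π_k T^k ∈ 𝒪_E[[T]]` with `π₁ ≠ 0`, `π₁ ∈ 𝔪_E`, and
let `A = Σ_{k≥1} a_k T^k ∈ E[[T]]` be the unique power series with zero constant term,
`a₁ = 1`, and `A(P(T)) = π₁·A(T)`. Then for every `x ∈ E` with `‖x‖ < ‖π₁‖`, the family
`(a_k x^k)` is summable in `E`, so the series `A(x)` converges. -/
theorem logarithm_summable
    {p : ℕ} [Fact p.Prime] (E : Type*) [NormedField E] [IsUltrametricDist E]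
    [NormedAlgebra ℚ_[p] E] [FiniteDimensional ℚ_[p] E]
    (P : PowerSeries E) (hPint : ∀ n, ‖coeff n P‖ ≤ 1)
    (hP0 : constantCoeff P = 0)
    (hπ1 : coeff 1 P ≠ 0) (hπ1m : ‖coeff 1 P‖ < 1)
    (A : PowerSeries E) (hA0 : constantCoeff A = 0) (hA1 : coeff 1 A = 1)
    (hAP : A.comp P = C (coeff 1 P) * A)
    (x : E) (hx : ‖x‖ < ‖coeff 1 P‖) :
    Summable (fun k : ℕ => coeff k A * x ^ k) :=
  logarithm_summable_general (p := p) E P hPint hP0 hπ1m A hAP x hx
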